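/- arXiv:2604.23904 — 2 statements merged into one kernel-verified Lean document; each statement's English description precedes it below -/
import Mathlib

section
/- Let (Ω, μ) be a probability space and let Q_f, Q* : {0,1} × Ω → (0,1) be measurable. Define the contrasts Δ_f(w) = Q_f(1,w) − Q_f(0,w) and Δ*(w) = Q*(1,w) − Q*(0,w), and the balanced Bernoulli KL outcome loss L_Y = ∫_Ω Σ_{a∈{0,1}} [Q*(a,w)·log(Q*(a,w)/Q_f(a,w)) + (1−Q*(a,w))·log((1−Q*(a,w))/(1−Q_f(a,w)))] dμ(w). Then (∫_Ω (Δ_f(w) − Δ*(w))² dμ(w))^{1/2} ≤ 2·√(L_Y). -/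
open MeasureTheory Real Set

/-! Pinsker's inequality for Bernoulli laws, `2 (p - q)² ≤ KL(Bern p ‖ Bern q)`: the map
`q ↦ KL(Bern p ‖ Bern q) - 2 (p - q)²` has derivative `(q - p) (1 / (q (1 - q)) - 4)`, which
has the sign of `q - p` because a Bernoulli variance `q (1 - q)` is at most `1 / 4`; so the map
is least at `q = p`, where it vanishes. Applied to both arms, Pinsker bounds the contrast error
pointwise:
`(Δ_f - Δ*)² ≤ 2 (Q_f(1,·) - Q*(1,·))² + 2 (Q_f(0,·) - Q*(0,·))² ≤ kl(1,·) + kl(0,·)`,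
and integrating gives `‖Δ_f - Δ*‖² ≤ L_Y`. -/

theorem isMinOn_of_hasDerivAt_of_sign {s : Set ℝ} (hs : s.OrdConnected) {f f' : ℝ → ℝ} {p : ℝ}
    (hp : p ∈ s) (hf : ∀ x ∈ s, HasDerivAt f (f' x) x) (hsign : ∀ x ∈ s, 0 ≤ (x - p) * f' x) :
    IsMinOn f s p := by
  intro q hq
  have hderiv {a b : ℝ} (hab : Icc a b ⊆ s) :
      ∀ x ∈ interior (Icc a b), HasDerivWithinAt f (f' x) (interior (Icc a b)) x :=
    fun x hx => (hf x (hab (interior_subset hx))).hasDerivWithinAt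
  have hcont {a b : ℝ} (hab : Icc a b ⊆ s) : ContinuousOn f (Icc a b) :=
    fun x hx => (hf x (hab hx)).continuousAt.continuousWithinAt
  rcases le_total p q with hpq | hqp
  · have hsub := hs.out hp hq
    refine monotoneOn_of_hasDerivWithinAt_nonneg (convex_Icc p q) (hcont hsub) (hderiv hsub)
      (fun x hx => ?_) (left_mem_Icc.2 hpq) (right_mem_Icc.2 hpq) hpq
    rw [interior_Icc] at hx
    exact nonneg_of_mul_nonneg_right (hsign x (hsub (Ioo_subset_Icc_self hx))) (sub_pos.2 hx.1)
  · have hsub := hs.out hq hp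
    refine antitoneOn_of_hasDerivWithinAt_nonpos (convex_Icc q p) (hcont hsub) (hderiv hsub)
      (fun x hx => ?_) (left_mem_Icc.2 hqp) (right_mem_Icc.2 hqp) hqp
    rw [interior_Icc] at hx
    exact nonpos_of_mul_nonneg_right (hsign x (hsub (Ioo_subset_Icc_self hx))) (sub_neg.2 hx.2)

noncomputable def bernoulliKL (p q : ℝ) : ℝ :=
  p * log (p / q) + (1 - p) * log ((1 - p) / (1 - q))

theorem hasDerivAt_bernoulliKL {p x : ℝ} (hp : p ∈ Ioo (0 : ℝ) 1) (hx : x ∈ Ioo (0 : ℝ) 1) :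
    HasDerivAt (bernoulliKL p) ((x - p) / (x * (1 - x))) x := by
  obtain ⟨hp0, hp1⟩ := hp
  obtain ⟨hx0, hx1⟩ := hx
  have hx1' : 1 - x ≠ 0 := by linarith
  have h₁ : HasDerivAt (fun y => log (p / y)) (-1 / x) x := by
    convert ((hasDerivAt_const x p).fun_div (hasDerivAt_id' x) hx0.ne').log
      (div_ne_zero hp0.ne' hx0.ne') using 1
    field_simp
    ring
  have h₂ : HasDerivAt (fun y => log ((1 - p) / (1 - y))) (1 / (1 - x)) x := by
    convert ((hasDerivAt_const x (1 - p)).fun_div ((hasDerivAt_id' x).const_sub 1) hx1').log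
      (div_ne_zero (by linarith) hx1') using 1
    field_simp
    ring
  exact ((h₁.const_mul p).add (h₂.const_mul (1 - p))).congr_deriv (by field_simp; ring)

theorem two_mul_sq_sub_le_bernoulliKL {p q : ℝ} (hp : p ∈ Ioo (0 : ℝ) 1)
    (hq : q ∈ Ioo (0 : ℝ) 1) : 2 * (p - q) ^ 2 ≤ bernoulliKL p q := by
  have hderiv (x : ℝ) (hx : x ∈ Ioo (0 : ℝ) 1) :
      HasDerivAt (fun y => bernoulliKL p y - 2 * (p - y) ^ 2)
        ((x - p) / (x * (1 - x)) - 4 * (x - p)) x :=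
    (hasDerivAt_bernoulliKL hp hx).sub
      (((((hasDerivAt_id x).const_sub p).pow 2).const_mul 2).congr_deriv (by simp; ring))
  have hmin := isMinOn_of_hasDerivAt_of_sign ordConnected_Ioo hp hderiv fun x ⟨hx0, hx1⟩ => by
    have hvar : 0 < x * (1 - x) := mul_pos hx0 (by linarith)
    have hvar_le : 4 * (x * (1 - x)) ≤ 1 := by nlinarith [sq_nonneg (2 * x - 1)]
    rw [show (x - p) * ((x - p) / (x * (1 - x)) - 4 * (x - p))
      = (x - p) ^ 2 * (1 - 4 * (x * (1 - x))) / (x * (1 - x)) by field_simp]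
    exact div_nonneg (mul_nonneg (sq_nonneg _) (by linarith)) hvar.le
  have hself : bernoulliKL p p = 0 := by
    simp [bernoulliKL, div_self hp.1.ne', div_self (sub_pos.2 hp.2).ne']
  have := isMinOn_iff.1 hmin q hq
  simp only [hself, sub_self] at this
  linarith

theorem contrast_l2_from_balanced_kl_general {Ω : Type*} [MeasurableSpace Ω]
    (μ : Measure Ω)
    (Qf Qs : Bool → Ω → ℝ)
    (hQf01 : ∀ a w, Qf a w ∈ Set.Ioo (0 : ℝ) 1)
    (hQs01 : ∀ a w, Qs a w ∈ Set.Ioo (0 : ℝ) 1)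
    (kl : Bool → Ω → ℝ)
    (hkl : ∀ a w, kl a w =
      Qs a w * Real.log (Qs a w / Qf a w) +
        (1 - Qs a w) * Real.log ((1 - Qs a w) / (1 - Qf a w)))
    (hklint : Integrable (fun w => kl true w + kl false w) μ)
    (LY : ℝ) (hLY : LY = ∫ w, (kl true w + kl false w) ∂μ) :
    Real.sqrt (∫ w,
        ((Qf true w - Qf false w) - (Qs true w - Qs false w)) ^ 2 ∂μ) ≤
      2 * Real.sqrt LY := by
  have hpinsker (a : Bool) (w : Ω) : 2 * (Qs a w - Qf a w) ^ 2 ≤ kl a w :=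
    hkl a w ▸ two_mul_sq_sub_le_bernoulliKL (hQs01 a w) (hQf01 a w)
  have hpointwise (w : Ω) :
      ((Qf true w - Qf false w) - (Qs true w - Qs false w)) ^ 2 ≤ kl true w + kl false w := by
    nlinarith [hpinsker true w, hpinsker false w,
      sq_nonneg ((Qf true w - Qs true w) + (Qf false w - Qs false w))]
  have hle : ∫ w, ((Qf true w - Qf false w) - (Qs true w - Qs false w)) ^ 2 ∂μ ≤ LY :=
    hLY ▸ integral_mono_of_nonneg (.of_forall fun _ => sq_nonneg _) hklint
      (.of_forall hpointwise)
  calc _ ≤ √LY := sqrt_le_sqrt hle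
    _ ≤ 2 * √LY := le_mul_of_one_le_left (sqrt_nonneg LY) one_le_two

/-- On a probability space `(Ω, μ)`, for measurable conditional
outcome models `Q_f, Q* : {0,1} × Ω → (0,1)` with contrasts
`Δ_f = Q_f(1,·) − Q_f(0,·)` and `Δ* = Q*(1,·) − Q*(0,·)`, and balanced Bernoulli
KL outcome loss `L_Y`, the contrast error satisfies
`‖Δ_f − Δ*‖_{L²(μ)} ≤ 2·√L_Y`. -/
theorem contrast_l2_from_balanced_kl {Ω : Type*} [MeasurableSpace Ω]
    (μ : Measure Ω) [IsProbabilityMeasure μ]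
    (Qf Qs : Bool → Ω → ℝ)
    (hQfm : ∀ a, Measurable (Qf a)) (hQsm : ∀ a, Measurable (Qs a))
    (hQf01 : ∀ a w, Qf a w ∈ Set.Ioo (0 : ℝ) 1)
    (hQs01 : ∀ a w, Qs a w ∈ Set.Ioo (0 : ℝ) 1)
    (kl : Bool → Ω → ℝ)
    (hkl : ∀ a w, kl a w =
      Qs a w * Real.log (Qs a w / Qf a w) +
        (1 - Qs a w) * Real.log ((1 - Qs a w) / (1 - Qf a w)))
    (hklint : Integrable (fun w => kl true w + kl false w) μ)
    (LY : ℝ) (hLY : LY = ∫ w, (kl true w + kl false w) ∂μ) :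
    Real.sqrt (∫ w,
        ((Qf true w - Qf false w) - (Qs true w - Qs false w)) ^ 2 ∂μ) ≤
      2 * Real.sqrt LY :=
  contrast_l2_from_balanced_kl_general μ Qf Qs hQf01 hQs01 kl hkl hklint LY hLY
end

section
/- Let (Ω, ℱ, P) be a probability space carrying random variables W (taking values in a measurable space), A taking values in {0,1}, and bounded real-valued potential outcomes Y⁰, Y¹, with observed outcome Y = A·Y¹ + (1−A)·Y⁰ (consistency). Assume ignorability: the pair (Y⁰, Y¹) is conditionally independent of A given σ(W); and positivity: the conditional expectation g(W) = E[A | σ(W)] satisfies 0 < g(W) < 1 almost surely. Then E[Y¹ − Y⁰] = E[ E[Y·A | σ(W)] / E[A | σ(W)] − E[Y·(1−A) | σ(W)] / E[(1−A) | σ(W)] ], i.e., the average treatment effect is identified from the observed-data distribution of (W, A, Y). -/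
/-!
Conditional independence of `f` and `g` given `m'` says that, for almost every `ω`, `f` and `g` are
independent under the regular conditional distribution `condExpKernel μ m' ω`; integrating against
that kernel, `E[f g | m'] = E[f | m'] E[g | m']`. With `g = A` (resp. `1 - A`), consistency turns
`Y A` into `Y¹ A` (resp. `Y (1 - A)` into `Y⁰ (1 - A)`), so positivity lets us divide out
`E[A | m']` (resp. `E[1 - A | m']`). The integrand on the right is thus `E[Y¹ | m'] - E[Y⁰ | m']`,
whose integral is `E[Y¹ - Y⁰]` by the tower property.
-/

open MeasureTheory ProbabilityTheory

namespace ProbabilityTheory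

variable {Ω : Type*} {m' mΩ : MeasurableSpace Ω} [StandardBorelSpace Ω] {hm' : m' ≤ mΩ}
  {μ : Measure Ω} [IsFiniteMeasure μ]

theorem CondIndepFun.ae_indepFun_condExpKernel {β β' : Type*} {mβ : MeasurableSpace β}
    {mβ' : MeasurableSpace β'} [MeasurableSpace.CountableOrCountablyGenerated Ω (β × β')]
    {f : Ω → β} {g : Ω → β'} (hf : Measurable f) (hg : Measurable g)
    (h : CondIndepFun m' hm' f g μ) :
    ∀ᵐ ω ∂μ, IndepFun f g (condExpKernel μ m' ω) := by
  filter_upwards [ae_of_ae_trim hm' ((condIndepFun_iff_map_prod_eq_prod_map_map hf hg).1 h)]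
    with ω hω
  rw [indepFun_iff_map_prod_eq_prod_map_map hf.aemeasurable hg.aemeasurable]
  rwa [Kernel.map_apply _ (hf.prodMk hg), Kernel.prod_apply, Kernel.map_apply _ hf,
    Kernel.map_apply _ hg] at hω

variable {f g : Ω → ℝ}

theorem CondIndepFun.condExp_mul_ae_eq (hf : Measurable f) (hg : Measurable g)
    (hf_int : Integrable f μ) (hg_int : Integrable g μ) (hfg_int : Integrable (f * g) μ)
    (h : CondIndepFun m' hm' f g μ) :
    μ[f * g | m'] =ᵐ[μ] μ[f | m'] * μ[g | m'] := by
  filter_upwards [h.ae_indepFun_condExpKernel hf hg,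
    condExp_ae_eq_integral_condExpKernel hm' hfg_int,
    condExp_ae_eq_integral_condExpKernel hm' hf_int,
    condExp_ae_eq_integral_condExpKernel hm' hg_int] with ω hind hfg hf' hg'
  rw [hfg, Pi.mul_apply, hf', hg']
  exact hind.integral_mul_eq_mul_integral hf.aestronglyMeasurable hg.aestronglyMeasurable

theorem CondIndepFun.condExp_mul_div_condExp_ae_eq {c : ℝ} (hf : Measurable f)
    (hg : Measurable g) (hf_int : Integrable f μ) (hg_bdd : ∀ᵐ ω ∂μ, ‖g ω‖ ≤ c)
    (h : CondIndepFun m' hm' f g μ) (hg_ne : ∀ᵐ ω ∂μ, μ[g | m'] ω ≠ 0) :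
    (fun ω ↦ μ[f * g | m'] ω / μ[g | m'] ω) =ᵐ[μ] μ[f | m'] := by
  have hg_int : Integrable g μ := .of_bound hg.aestronglyMeasurable c hg_bdd
  have hfg_int : Integrable (f * g) μ := hf_int.mul_bdd hg.aestronglyMeasurable hg_bdd
  filter_upwards [h.condExp_mul_ae_eq hf hg hf_int hg_int hfg_int, hg_ne] with ω hω hne
  rw [hω, Pi.mul_apply, mul_div_cancel_right₀ _ hne]

end ProbabilityTheory

namespace MeasureTheory

theorem condExp_const_sub {α : Type*} {m m₀ : MeasurableSpace α} {μ : Measure α}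
    [IsFiniteMeasure μ] (hm : m ≤ m₀) {f : α → ℝ} (hf : Integrable f μ) (c : ℝ) :
    μ[fun a ↦ c - f a | m] =ᵐ[μ] fun a ↦ c - μ[f | m] a := by
  filter_upwards [condExp_sub (integrable_const c) hf m] with a ha
  rw [show (fun a ↦ c - f a) = (fun _ ↦ c) - f from rfl, ha, Pi.sub_apply, condExp_const hm]

end MeasureTheory

theorem ate_identification_general {Ω : Type*} [mΩ : MeasurableSpace Ω] [StandardBorelSpace Ω]
    (μ : Measure Ω) [IsProbabilityMeasure μ]
    (A Y0 Y1 Y : Ω → ℝ)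
    (hA : Measurable A)
    (hY0 : Measurable Y0) (hY1 : Measurable Y1)
    (hAbin : ∀ ω, A ω = 0 ∨ A ω = 1)
    (hbdd : ∃ C : ℝ, ∀ ω, |Y0 ω| ≤ C ∧ |Y1 ω| ≤ C)
    (hconsistency : ∀ ω, Y ω = A ω * Y1 ω + (1 - A ω) * Y0 ω)
    (mW : MeasurableSpace Ω)
    (hmWle : mW ≤ mΩ)
    (hignorability : CondIndepFun mW hmWle (fun ω => (Y0 ω, Y1 ω)) A μ)
    (hpositivity : ∀ᵐ ω ∂μ, 0 < (μ[A | mW]) ω ∧ (μ[A | mW]) ω < 1) :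
    ∫ ω, (Y1 ω - Y0 ω) ∂μ =
      ∫ ω, (μ[fun ω' => Y ω' * A ω' | mW]) ω / (μ[A | mW]) ω -
          (μ[fun ω' => Y ω' * (1 - A ω') | mW]) ω /
            (μ[fun ω' => 1 - A ω' | mW]) ω ∂μ := by
  obtain ⟨C, hC⟩ := hbdd
  have hY0_int : Integrable Y0 μ := .of_bound hY0.aestronglyMeasurable C (ae_of_all _ (hC · |>.1))
  have hY1_int : Integrable Y1 μ := .of_bound hY1.aestronglyMeasurable C (ae_of_all _ (hC · |>.2))
  have hA_bdd : ∀ ω, ‖A ω‖ ≤ 1 ∧ ‖1 - A ω‖ ≤ 1 := fun ω ↦ by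
    rcases hAbin ω with h | h <;> simp [h]
  have hYA : (fun ω ↦ Y ω * A ω) = Y1 * A := by
    funext ω; rcases hAbin ω with h | h <;> simp [hconsistency ω, h]
  have hYA' : (fun ω ↦ Y ω * (1 - A ω)) = Y0 * fun ω ↦ 1 - A ω := by
    funext ω; rcases hAbin ω with h | h <;> simp [hconsistency ω, h]
  have h1 : (fun ω ↦ μ[fun ω' ↦ Y ω' * A ω' | mW] ω / μ[A | mW] ω) =ᵐ[μ] μ[Y1 | mW] := by
    have hind : CondIndepFun mW hmWle Y1 A μ := hignorability.comp measurable_snd measurable_id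
    rw [hYA]
    exact hind.condExp_mul_div_condExp_ae_eq hY1 hA hY1_int (ae_of_all _ (hA_bdd · |>.1))
      (hpositivity.mono fun ω h ↦ h.1.ne')
  have h0 : (fun ω ↦ μ[fun ω' ↦ Y ω' * (1 - A ω') | mW] ω / μ[fun ω' ↦ 1 - A ω' | mW] ω)
      =ᵐ[μ] μ[Y0 | mW] := by
    have hind : CondIndepFun mW hmWle Y0 (fun ω ↦ 1 - A ω) μ :=
      hignorability.comp measurable_fst (measurable_id.const_sub 1)
    have hA_int : Integrable A μ :=
      .of_bound hA.aestronglyMeasurable 1 (ae_of_all _ (hA_bdd · |>.1))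
    rw [hYA']
    refine hind.condExp_mul_div_condExp_ae_eq hY0 (hA.const_sub 1) hY0_int
      (ae_of_all _ (hA_bdd · |>.2)) ?_
    filter_upwards [condExp_const_sub hmWle hA_int 1, hpositivity] with ω hω hpos
    rw [hω]
    exact (sub_pos.2 hpos.2).ne'
  calc ∫ ω, (Y1 ω - Y0 ω) ∂μ = ∫ ω, (μ[Y1 | mW] ω - μ[Y0 | mW] ω) ∂μ := by
        rw [integral_sub hY1_int hY0_int, integral_sub integrable_condExp integrable_condExp,
          integral_condExp hmWle, integral_condExp hmWle]
    _ = _ := integral_congr_ae (h1.sub h0).symm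

/-- Identification of the average treatment effect. On a probability
space carrying covariates `W`, a binary treatment `A ∈ {0,1}`, and bounded potential
outcomes `Y⁰, Y¹` with observed outcome `Y = A·Y¹ + (1−A)·Y⁰` (consistency), if
`(Y⁰, Y¹)` is conditionally independent of `A` given `σ(W)` (ignorability) and
`0 < E[A | σ(W)] < 1` almost surely (positivity), then
`E[Y¹ − Y⁰] = E[ E[Y·A | σ(W)] / E[A | σ(W)] − E[Y·(1−A) | σ(W)] / E[(1−A) | σ(W)] ]`,
so the ATE is identified from the observed-data distribution of `(W, A, Y)`. -/
theorem ate_identification {Ω : Type*} [mΩ : MeasurableSpace Ω] [StandardBorelSpace Ω]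
    {𝓦 : Type*} [MeasurableSpace 𝓦]
    (μ : Measure Ω) [IsProbabilityMeasure μ]
    (W : Ω → 𝓦) (A Y0 Y1 Y : Ω → ℝ)
    (hW : Measurable W) (hA : Measurable A)
    (hY0 : Measurable Y0) (hY1 : Measurable Y1)
    (hAbin : ∀ ω, A ω = 0 ∨ A ω = 1)
    (hbdd : ∃ C : ℝ, ∀ ω, |Y0 ω| ≤ C ∧ |Y1 ω| ≤ C)
    (hconsistency : ∀ ω, Y ω = A ω * Y1 ω + (1 - A ω) * Y0 ω)
    (mW : MeasurableSpace Ω)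
    (hmW : mW = MeasurableSpace.comap W inferInstance)
    (hmWle : mW ≤ mΩ)
    (hignorability : CondIndepFun mW hmWle (fun ω => (Y0 ω, Y1 ω)) A μ)
    (hpositivity : ∀ᵐ ω ∂μ, 0 < (μ[A | mW]) ω ∧ (μ[A | mW]) ω < 1) :
    ∫ ω, (Y1 ω - Y0 ω) ∂μ =
      ∫ ω, (μ[fun ω' => Y ω' * A ω' | mW]) ω / (μ[A | mW]) ω -
          (μ[fun ω' => Y ω' * (1 - A ω') | mW]) ω /
            (μ[fun ω' => 1 - A ω' | mW]) ω ∂μ :=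
  ate_identification_general (mΩ := mΩ) μ A Y0 Y1 Y hA hY0 hY1 hAbin hbdd hconsistency mW hmWle
    hignorability hpositivity
end
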